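/- The matrix-valued potential coefficients Π_n = 2Γ(ν+2)(2ν+3)_{n-1}/(√π n!(ν+2)Γ(ν+1/2)) · diag((ν+1)/(ν+n+1), ν(ν+n+1)/((ν+n)(ν+n+2))) for n ≥ 1 satisfy the recursion Π_n = (C_{n,1}*)^{-1} Π_{n-1} A_{n-1,1}, with Π₀ = (Γ(ν+1)/(√π(ν+2)Γ(ν+1/2))) diag(1, (ν+1)/(ν+2)). -/

import Mathlib

open Real

/-!
Every `Π_n` is a scalar times the diagonal matrix `potDiag ν n`, including `n = 0`, where
`potDiag ν 0 = diag(1, (ν+1)/(ν+2))`. Passing from `n` to `n + 1` multiplies the scalar by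
`(2ν+n+2)/(n+1)`: for `n = 0` this is `Γ(ν+2) = (ν+1) Γ(ν+1)`, afterwards one more Pochhammer
factor over one more factorial factor. The recursion is then a rational identity between the
diagonal entries of `Π`, `A` and `C`.
-/

/-- Pochhammer (rising factorial) symbol `(a)_n = a(a+1)⋯(a+n-1)`. -/
noncomputable def poch (a : ℝ) (n : ℕ) : ℝ := ∏ i ∈ Finset.range n, (a + i)

/-- The matrix-valued potential coefficients `Π_n` (diagonal, given by their two
diagonal entries `i = 0, 1`). -/
noncomputable def Pot (ν : ℝ) (n : ℕ) (i : Fin 2) : ℝ :=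
  if n = 0 then
    Real.Gamma (ν + 1) / (Real.sqrt π * (ν + 2) * Real.Gamma (ν + 1 / 2)) *
      (if i = 0 then 1 else (ν + 1) / (ν + 2))
  else
    2 * Real.Gamma (ν + 2) * poch (2 * ν + 3) (n - 1) /
        (Real.sqrt π * (Nat.factorial n) * (ν + 2) * Real.Gamma (ν + 1 / 2)) *
      (if i = 0 then (ν + 1) / (ν + n + 1) else ν * (ν + n + 1) / ((ν + n) * (ν + n + 2)))

/-- Diagonal entries of `A_{n,1}`. -/
noncomputable def Acoef (ν : ℝ) (n : ℕ) (i : Fin 2) : ℝ :=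
  if i = 0 then (2 * ν + n + 2) / (4 * (ν + n + 2))
  else ((n : ℝ) + ν) * (2 * ν + n + 2) / (4 * (ν + n + 1) ^ 2)

/-- Diagonal entries of `C_{n,1}`. -/
noncomputable def Ccoef (ν : ℝ) (n : ℕ) (i : Fin 2) : ℝ :=
  if i = 0 then (n : ℝ) / (4 * (ν + n)) else (n : ℝ) * (ν + n + 2) / (4 * (ν + n + 1) ^ 2)

noncomputable def potDiag (ν : ℝ) (n : ℕ) (i : Fin 2) : ℝ :=
  if i = 0 then (ν + 1) / (ν + n + 1) else ν * (ν + n + 1) / ((ν + n) * (ν + n + 2))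

noncomputable def potScale (ν : ℝ) (n : ℕ) : ℝ :=
  if n = 0 then Real.Gamma (ν + 1) / (Real.sqrt π * (ν + 2) * Real.Gamma (ν + 1 / 2))
  else
    2 * Real.Gamma (ν + 2) * poch (2 * ν + 3) (n - 1) /
      (Real.sqrt π * (Nat.factorial n) * (ν + 2) * Real.Gamma (ν + 1 / 2))

lemma poch_succ (a : ℝ) (n : ℕ) : poch a (n + 1) = poch a n * (a + n) :=
  Finset.prod_range_succ _ _

lemma Pot_eq_potScale_mul_potDiag {ν : ℝ} (hν : 0 < ν) (n : ℕ) (i : Fin 2) :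
    Pot ν n i = potScale ν n * potDiag ν n i := by
  rcases Nat.eq_zero_or_pos n with rfl | hn
  · simp only [Pot, potScale, potDiag, if_true, CharP.cast_eq_zero, add_zero]
    congr 1
    split_ifs
    · exact (div_self (by positivity)).symm
    · field_simp
  · simp [Pot, potScale, potDiag, hn.ne', mul_div_assoc]

lemma potScale_succ {ν : ℝ} (hν : ν + 1 ≠ 0) (n : ℕ) :
    potScale ν (n + 1) = (2 * ν + n + 2) / (n + 1) * potScale ν n := by
  rcases n with _ | k
  · have hGamma : Real.Gamma (ν + 2) = (ν + 1) * Real.Gamma (ν + 1) := by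
      rw [show ν + 2 = ν + 1 + 1 by ring, Real.Gamma_add_one hν]
    simp only [potScale, hGamma, poch, if_true,
      Nat.add_one_ne_zero, if_false]
    rw [div_mul_div_comm]
    congr 1 <;> push_cast <;> ring
  · simp only [potScale, Nat.add_one_ne_zero, if_false, Nat.add_sub_cancel, poch_succ,
      Nat.factorial_succ (k + 1)]
    rw [div_mul_div_comm]
    congr 1 <;> push_cast <;> ring

lemma potDiag_recursion {ν : ℝ} (hν : 0 < ν) (n : ℕ) (i : Fin 2) :
    (2 * ν + n + 2) / (n + 1) * potDiag ν (n + 1) i =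
      (Ccoef ν (n + 1) i)⁻¹ * potDiag ν n i * Acoef ν n i := by
  have : (0 : ℝ) < n + 1 := by positivity
  have : (0 : ℝ) < ν + n := by positivity
  fin_cases i <;>
  · simp only [potDiag, Ccoef, Acoef, Fin.zero_eta, Fin.mk_one, Fin.isValue, one_ne_zero,
      ↓reduceIte, Nat.cast_add, Nat.cast_one, inv_div]
    field_simp
    ring

/-- the matrix-valued potential coefficients satisfy the recursion
`Π_n = (C_{n,1}*)⁻¹ Π_{n-1} A_{n-1,1}` (all matrices being diagonal, stated entrywise). -/
theorem matrix_potential_recursion (ν : ℝ) (hν : 0 < ν) (n : ℕ) (hn : 1 ≤ n) (i : Fin 2) :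
    Pot ν n i = (Ccoef ν n i)⁻¹ * Pot ν (n - 1) i * Acoef ν (n - 1) i := by
  obtain ⟨m, rfl⟩ : ∃ m, n = m + 1 := ⟨n - 1, (Nat.sub_add_cancel hn).symm⟩
  rw [Nat.add_sub_cancel, Pot_eq_potScale_mul_potDiag hν, Pot_eq_potScale_mul_potDiag hν,
    potScale_succ (by positivity)]
  linear_combination potScale ν m * potDiag_recursion hν m i
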